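/- arXiv:2505.08136 — 2 statements merged into one kernel-verified Lean document; each statement's English description precedes it below -/
import Mathlib

section
/- In an optimal solution, two same-score vertices placed in different groups have equal cut contributions: for every k ≥ 1, if x : V → Fin k satisfies f(x) ≥ f(y) for every assignment y : V → Fin k, and i, j ∈ V satisfy s(i) = s(j) and x(i) ≠ x(j), then ∑_{v ∈ V, x(v) ≠ x(i)} w(i,v) = ∑_{v ∈ V, x(v) ≠ x(j)} w(j,v). -/
open Finset

variable {V : Type*} [Fintype V]

def wgt (s : V → ℤ × ℤ × ℤ) (i j : V) : ℤ :=
  |(s i).1 - (s j).1| + |(s i).2.1 - (s j).2.1| + |(s i).2.2 - (s j).2.2|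

def objf (s : V → ℤ × ℤ × ℤ) {k : ℕ} (x : V → Fin k) : ℤ :=
  ∑ i : V, ∑ j : V, if x i ≠ x j then wgt s i j else 0

def wgt' (s : V → ℤ × ℤ × ℤ) (a b : ℤ × ℤ × ℤ) : ℤ :=
  ∑ i ∈ univ.filter (fun i => s i = a), ∑ j ∈ univ.filter (fun j => s j = b), wgt s i j

def objR (s : V → ℤ × ℤ × ℤ) {k : ℕ} (y : ℤ × ℤ × ℤ → Fin k) : ℤ :=
  ∑ a ∈ univ.image s, ∑ b ∈ univ.image s, if y a ≠ y b then wgt' s a b else 0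

/-! Moving a single vertex `i` to another class changes the cut value by twice the change of
its own contribution, so at a maximum no single move helps. If `i` and `j` have the same
weight profile, moving `i` into the class of `j` and moving `j` into the class of `i` give the
two opposite inequalities between their contributions. -/

namespace MaxCut

variable {α R : Type*} [DecidableEq α]

section CommRing

variable [CommRing R]

def cutValue (w : V → V → R) (x : V → α) : R :=
  ∑ u, ∑ v, if x u ≠ x v then w u v else 0

/-- The cut contribution that `i` would have if it were placed in the class `c`. -/
def cutContribution (w : V → V → R) (x : V → α) (i : V) (c : α) : R :=
  ∑ v, if x v ≠ c then w i v else 0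

variable [DecidableEq V] {w : V → V → R}

theorem cutValue_eq_two_mul_add_sum_compl (hw : ∀ u v, w u v = w v u) (x : V → α) (i : V) :
    cutValue w x = 2 * cutContribution w x i (x i) +
      ∑ u ∈ {i}ᶜ, ∑ v ∈ {i}ᶜ, if x u ≠ x v then w u v else 0 := by
  have row_i : (∑ v, if x i ≠ x v then w i v else 0) = cutContribution w x i (x i) :=
    sum_congr rfl fun v _ => by simp only [ne_comm]
  have col_i : (∑ u ∈ {i}ᶜ, if x u ≠ x i then w u i else 0) = cutContribution w x i (x i) := by
    rw [cutContribution, Fintype.sum_eq_add_sum_compl i, if_neg (not_not.2 rfl), zero_add]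
    exact sum_congr rfl fun u _ => by rw [hw]
  rw [cutValue, Fintype.sum_eq_add_sum_compl i, row_i]
  simp_rw [Fintype.sum_eq_add_sum_compl i (f := fun v => if x _ ≠ x v then w _ v else 0)]
  rw [sum_add_distrib, col_i]
  ring

theorem cutValue_update (hw : ∀ u v, w u v = w v u) (x : V → α) {i : V} (hi : w i i = 0)
    (c : α) :
    cutValue w (Function.update x i c) =
      cutValue w x + 2 * (cutContribution w x i c - cutContribution w x i (x i)) := by
  have contribution_update :
      cutContribution w (Function.update x i c) i c = cutContribution w x i c := by
    refine sum_congr rfl fun v _ => ?_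
    rcases eq_or_ne v i with rfl | hv
    · simp [hi]
    · rw [Function.update_of_ne hv]
  have rest_update : ∀ u ∈ ({i}ᶜ : Finset V), ∀ v ∈ ({i}ᶜ : Finset V),
      (if Function.update x i c u ≠ Function.update x i c v then w u v else 0) =
        if x u ≠ x v then w u v else 0 := by
    intro u hu v hv
    rw [Function.update_of_ne (by simpa using hu), Function.update_of_ne (by simpa using hv)]
  rw [cutValue_eq_two_mul_add_sum_compl hw, cutValue_eq_two_mul_add_sum_compl hw x i,
    Function.update_self, contribution_update,
    sum_congr rfl fun u hu => sum_congr rfl (rest_update u hu)]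
  ring

end CommRing

variable [CommRing R] [LinearOrder R] [IsStrictOrderedRing R] {w : V → V → R}

theorem cutContribution_le_of_isMax (hw : ∀ u v, w u v = w v u) {x : V → α}
    (hx : ∀ y : V → α, cutValue w y ≤ cutValue w x) {i : V} (hi : w i i = 0) (c : α) :
    cutContribution w x i c ≤ cutContribution w x i (x i) := by
  classical
  have := hx (Function.update x i c)
  rw [cutValue_update hw x hi] at this
  linarith

theorem cutContribution_eq_of_isMax (hw : ∀ u v, w u v = w v u) {x : V → α}
    (hx : ∀ y : V → α, cutValue w y ≤ cutValue w x) {i j : V} (hi : w i i = 0) (hj : w j j = 0)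
    (hij : w i = w j) :
    cutContribution w x i (x i) = cutContribution w x j (x j) := by
  have profile (c : α) : cutContribution w x i c = cutContribution w x j c := by
    simp only [cutContribution, hij]
  apply le_antisymm
  · calc cutContribution w x i (x i) = cutContribution w x j (x i) := profile _
      _ ≤ cutContribution w x j (x j) := cutContribution_le_of_isMax hw hx hj _
  · calc cutContribution w x j (x j) = cutContribution w x i (x j) := (profile _).symm
      _ ≤ cutContribution w x i (x i) := cutContribution_le_of_isMax hw hx hi _

end MaxCut

omit [Fintype V] in
theorem wgt_comm (s : V → ℤ × ℤ × ℤ) (i j : V) : wgt s i j = wgt s j i := by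
  simp only [wgt, abs_sub_comm]

omit [Fintype V] in
theorem wgt_self (s : V → ℤ × ℤ × ℤ) (i : V) : wgt s i i = 0 := by
  simp [wgt]

omit [Fintype V] in
theorem wgt_eq_of_eq {s : V → ℤ × ℤ × ℤ} {i j : V} (hs : s i = s j) : wgt s i = wgt s j := by
  funext v
  simp only [wgt, hs]

theorem equal_cut_contributions_general (s : V → ℤ × ℤ × ℤ) (k : ℕ)
    (x : V → Fin k) (hopt : ∀ y : V → Fin k, objf s x ≥ objf s y)
    (i j : V) (hs : s i = s j) :
    (∑ v : V, if x v ≠ x i then wgt s i v else 0) =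
      (∑ v : V, if x v ≠ x j then wgt s j v else 0) := by
  exact MaxCut.cutContribution_eq_of_isMax (wgt_comm s) hopt (wgt_self s i) (wgt_self s j)
    (wgt_eq_of_eq hs)

/-- In an optimal solution, two same-score vertices placed in different groups have
equal cut contributions. -/
theorem equal_cut_contributions (s : V → ℤ × ℤ × ℤ) (k : ℕ) (hk : 1 ≤ k)
    (x : V → Fin k) (hopt : ∀ y : V → Fin k, objf s x ≥ objf s y)
    (i j : V) (hs : s i = s j) (hx : x i ≠ x j) :
    (∑ v : V, if x v ≠ x i then wgt s i v else 0) =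
      (∑ v : V, if x v ≠ x j then wgt s j v else 0) :=
  equal_cut_contributions_general s k x hopt i j hs
end

section
/- Moving a vertex to the group of a same-score vertex preserves optimality: for every k ≥ 1, if x : V → Fin k satisfies f(x) ≥ f(y) for every assignment y : V → Fin k, and i, j ∈ V satisfy s(i) = s(j) and x(i) ≠ x(j), then the assignment x' = Function.update x j (x(i)) also satisfies f(x') ≥ f(y) for every assignment y : V → Fin k (equivalently, f(x') = f(x)). -/
/-! Let `σ` be the transposition of `i` and `j`. Relabelling `j` as `i` and relabelling `i` as `j`
together change the cut exactly as much as composing with `σ` does, because the two vertices are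
joined by an edge of weight `0`: `f(x[j ↦ x i]) + f(x[i ↦ x j]) = f(x) + f(x ∘ σ)`. Since
`s ∘ σ = s`, the weights are `σ`-invariant, so `f(x ∘ σ) = f(x)`, and optimality of `x` gives
`f(x[i ↦ x j]) ≤ f(x)`; hence `f(x[j ↦ x i]) ≥ f(x)`. -/

open Finset

variable {V : Type*} [Fintype V]

section Cut

variable {α M : Type*} [DecidableEq α]

def cutWeight [AddCommMonoid M] (w : V → V → M) (x : V → α) : M :=
  ∑ a : V, ∑ b : V, if x a ≠ x b then w a b else 0

section AddCommMonoid

variable [AddCommMonoid M] {w : V → V → M}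

theorem cutWeight_comp_perm (σ : Equiv.Perm V) (hw : ∀ a b, w (σ a) (σ b) = w a b)
    (x : V → α) : cutWeight w (x ∘ σ) = cutWeight w x :=
  Fintype.sum_equiv σ _ _ fun a => Fintype.sum_equiv σ _ _ fun b => by
    simp only [Function.comp_apply, hw]

theorem cutWeight_update_add_update [DecidableEq V] {i j : V} (hij : w i j = 0)
    (hji : w j i = 0) (x : V → α) :
    cutWeight w (Function.update x j (x i)) + cutWeight w (Function.update x i (x j)) =
      cutWeight w x + cutWeight w (x ∘ Equiv.swap i j) := by
  simp only [cutWeight, ← Finset.sum_add_distrib]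
  refine Fintype.sum_congr _ _ fun a => Fintype.sum_congr _ _ fun b => ?_
  rcases eq_or_ne i j with rfl | hne
  · simp
  simp only [Function.update_apply, Function.comp_apply, Equiv.swap_apply_def]
  split_ifs <;> simp_all [add_comm]

end AddCommMonoid

theorem cutWeight_le_cutWeight_update_of_isMax [DecidableEq V] [AddCommMonoid M] [PartialOrder M]
    [IsOrderedCancelAddMonoid M] {w : V → V → M} {i j : V} (hij : w i j = 0) (hji : w j i = 0)
    (hw : ∀ a b, w (Equiv.swap i j a) (Equiv.swap i j b) = w a b)
    {x : V → α} (hx : ∀ y : V → α, cutWeight w y ≤ cutWeight w x) :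
    cutWeight w x ≤ cutWeight w (Function.update x j (x i)) := by
  have hsum := cutWeight_update_add_update hij hji x
  rw [cutWeight_comp_perm _ hw] at hsum
  refine le_of_add_le_add_right (a := cutWeight w (Function.update x i (x j))) ?_
  calc cutWeight w x + cutWeight w (Function.update x i (x j))
      ≤ cutWeight w x + cutWeight w x := add_le_add_right (hx _) _
    _ = _ := hsum.symm

end Cut

theorem objf_eq_cutWeight (s : V → ℤ × ℤ × ℤ) {k : ℕ} (x : V → Fin k) :
    objf s x = cutWeight (wgt s) x := rfl

section Score

variable {ι : Type*}

theorem wgt_eq_zero_of_eq {s : ι → ℤ × ℤ × ℤ} {a b : ι} (h : s a = s b) : wgt s a b = 0 := by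
  simp [wgt, h]

theorem wgt_perm {s : ι → ℤ × ℤ × ℤ} {σ : Equiv.Perm ι} (h : ∀ a, s (σ a) = s a) (a b : ι) :
    wgt s (σ a) (σ b) = wgt s a b := by
  simp [wgt, h]

theorem apply_swap_of_eq {β : Type*} [DecidableEq ι] {s : ι → β} {i j : ι} (h : s i = s j)
    (a : ι) : s (Equiv.swap i j a) = s a := by
  rw [Equiv.swap_apply_def]
  split_ifs <;> simp_all

end Score

theorem move_preserves_optimality_general [DecidableEq V] (s : V → ℤ × ℤ × ℤ) (k : ℕ)
    (x : V → Fin k) (hopt : ∀ y : V → Fin k, objf s x ≥ objf s y)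
    (i j : V) (hs : s i = s j) :
    ∀ y : V → Fin k, objf s (Function.update x j (x i)) ≥ objf s y := by
  simp only [objf_eq_cutWeight] at hopt ⊢
  have hmove : cutWeight (wgt s) x ≤ cutWeight (wgt s) (Function.update x j (x i)) :=
    cutWeight_le_cutWeight_update_of_isMax (wgt_eq_zero_of_eq hs) (wgt_eq_zero_of_eq hs.symm)
      (wgt_perm (apply_swap_of_eq hs)) hopt
  exact fun y => (hopt y).trans hmove

/-- Moving a vertex to the group of a same-score vertex preserves optimality. -/
theorem move_preserves_optimality [DecidableEq V] (s : V → ℤ × ℤ × ℤ) (k : ℕ) (hk : 1 ≤ k)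
    (x : V → Fin k) (hopt : ∀ y : V → Fin k, objf s x ≥ objf s y)
    (i j : V) (hs : s i = s j) (hx : x i ≠ x j) :
    ∀ y : V → Fin k, objf s (Function.update x j (x i)) ≥ objf s y :=
  move_preserves_optimality_general s k x hopt i j hs
end
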